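/- arXiv:1006.3377 — 6 statements merged into one kernel-verified Lean document; each statement's English description precedes it below -/
import Mathlib

section
/- Let G be a finite group, let p be an odd prime, and let g ∈ G be an element whose centralizer C_G(g) is a p-group. If g is conjugate in G to g⁻¹, then there exists x ∈ G with x² = 1 and x⁻¹ g x = g⁻¹. -/
/-!
If `y⁻¹ g y = g⁻¹`, then `y²` centralizes `g`, so `y²` has `p`-power order `q`. Since `q` is odd,
`x = y^q = (y²)^((q-1)/2) y` still inverts `g`, and `x² = (y²)^q = 1`.
-/

section

variable {G : Type*} [Group G] {g y : G}

theorem commute_pow_two_of_inv_mul_mul_eq_inv (hy : y⁻¹ * g * y = g⁻¹) : Commute g (y ^ 2) := by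
  have hinv : y⁻¹ * g⁻¹ * y = g := by simpa [mul_assoc] using congrArg (·⁻¹) hy
  calc g * y ^ 2 = y * (y⁻¹ * g * y) * y := by
        simp only [pow_two, mul_assoc, mul_inv_cancel_left]
    _ = y ^ 2 * (y⁻¹ * g⁻¹ * y) := by
        rw [hy]; simp only [pow_two, mul_assoc, mul_inv_cancel_left]
    _ = y ^ 2 * g := by rw [hinv]

theorem inv_mul_mul_pow_eq_inv_of_odd (hy : y⁻¹ * g * y = g⁻¹) {m : ℕ} (hm : Odd m) :
    (y ^ m)⁻¹ * g * y ^ m = g⁻¹ := by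
  obtain ⟨k, rfl⟩ := hm
  have hc : Commute g ((y ^ 2) ^ k) := (commute_pow_two_of_inv_mul_mul_eq_inv hy).pow_right k
  calc (y ^ (2 * k + 1))⁻¹ * g * y ^ (2 * k + 1)
      = y⁻¹ * (((y ^ 2) ^ k)⁻¹ * (g * (y ^ 2) ^ k)) * y := by
        rw [pow_succ, pow_mul]; group
    _ = g⁻¹ := by rw [hc.eq, inv_mul_cancel_left, hy]

end

theorem real_with_pgroup_centralizer_strongly_real_general {G : Type*} [Group G]
    (p : ℕ) (hodd : Odd p) (g : G)
    (hc : IsPGroup p (Subgroup.centralizer {g}))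
    (hreal : ∃ y : G, y⁻¹ * g * y = g⁻¹) :
    ∃ x : G, x ^ 2 = 1 ∧ x⁻¹ * g * x = g⁻¹ := by
  obtain ⟨y, hy⟩ := hreal
  have hy2 : y ^ 2 ∈ Subgroup.centralizer {g} :=
    Subgroup.mem_centralizer_singleton_iff.mpr (commute_pow_two_of_inv_mul_mul_eq_inv hy).eq.symm
  obtain ⟨n, hn⟩ := hc ⟨y ^ 2, hy2⟩
  refine ⟨y ^ p ^ n, ?_, inv_mul_mul_pow_eq_inv_of_odd hy hodd.pow⟩
  rw [← pow_mul, mul_comm, pow_mul]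
  simpa using congrArg Subtype.val hn

/-- If `g` is a real element of a finite group whose centralizer is a `p`-group
for an odd prime `p`, then `g` is inverted by an element of order at most 2. -/
theorem real_with_pgroup_centralizer_strongly_real {G : Type*} [Group G] [Finite G]
    (p : ℕ) (hp : p.Prime) (hodd : Odd p) (g : G)
    (hc : IsPGroup p (Subgroup.centralizer {g}))
    (hreal : ∃ y : G, y⁻¹ * g * y = g⁻¹) :
    ∃ x : G, x ^ 2 = 1 ∧ x⁻¹ * g * x = g⁻¹ :=
  real_with_pgroup_centralizer_strongly_real_general p hodd g hc hreal
end

section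
/- Let q be a prime power and let F be a finite field with q elements. Then the projective special linear group PSL₂(F) = SL₂(F)/Z(SL₂(F)) is strongly real (every element is conjugate to its inverse by an involution) if and only if q ≢ 3 (mod 4). -/
/-!
A trace-zero `T ∈ SL₂` satisfies `T² = -1` (Cayley–Hamilton), so its class is an involution of
`PSL₂` unless `T` is scalar. By the polarised Cayley–Hamilton identity
`GT + TG = tr(G) T + tr(TG) 1` for trace-zero `T`, such a `T` moreover satisfies `GTG = T`, i.e. it
inverts `G`, as soon as `tr(TG) = 0`. If `-1 = i²`, a suitable `T` is `i` times a trace-zero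
matrix of determinant `-1` orthogonal to `G`, which can be written down explicitly.

If `-1` is not a square, already the unipotent `U = !![1, 1; 0, 1]` is not conjugate to its inverse
in `PSL₂`: such a conjugation lifts to `UTU = xT` in `SL₂` for a scalar `x`, and comparing entries
forces either `-1 = a²` with `a = T₀₀`, or `det T = 0`.
Over `𝔽_q`, `-1` is a square exactly when `q ≢ 3 (mod 4)`.
-/

open Matrix

theorem inv_mul_mul_eq_inv_iff {G : Type*} [Group G] {g t : G} :
    t⁻¹ * g * t = g⁻¹ ↔ g * t * g = t := by
  rw [eq_inv_iff_mul_eq_one, mul_assoc, mul_assoc, ← mul_assoc g, inv_mul_eq_one, eq_comm]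

namespace Matrix

section CommRing

variable {R : Type*} [CommRing R]

theorem mul_self_eq_neg_one_of_trace_eq_zero {T : Matrix (Fin 2) (Fin 2) R} (hdet : T.det = 1)
    (htr : T.trace = 0) : T * T = -1 := by
  rw [det_fin_two] at hdet
  rw [trace_fin_two] at htr
  ext i j
  fin_cases i <;> fin_cases j <;>
    simp only [Fin.zero_eta, Fin.mk_one, mul_apply, Fin.sum_univ_two, Matrix.neg_apply,
      Matrix.one_apply_eq, Matrix.one_apply_ne, ne_eq, zero_ne_one, one_ne_zero, not_false_eq_true,
      neg_zero]
  · linear_combination T 0 0 * htr - hdet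
  · linear_combination T 0 1 * htr
  · linear_combination T 1 0 * htr
  · linear_combination T 1 1 * htr - hdet

theorem mul_mul_eq_self_of_trace_mul_eq_zero {G T : Matrix (Fin 2) (Fin 2) R} (hG : G.det = 1)
    (hT : T.trace = 0) (hTG : (T * G).trace = 0) : G * T * G = T := by
  rw [det_fin_two] at hG
  rw [trace_fin_two] at hT
  rw [trace_fin_two, mul_apply, mul_apply, Fin.sum_univ_two, Fin.sum_univ_two] at hTG
  ext i j
  fin_cases i <;> fin_cases j <;> simp only [Fin.zero_eta, Fin.mk_one, mul_apply, Fin.sum_univ_two]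
  · linear_combination G 0 0 * hTG + T 0 0 * hG - (G 0 0 * G 1 1 - G 0 1 * G 1 0) * hT
  · linear_combination G 0 1 * hTG + T 0 1 * hG
  · linear_combination G 1 0 * hTG + T 1 0 * hG
  · linear_combination G 1 1 * hTG + T 1 1 * hG - (G 0 0 * G 1 1 - G 0 1 * G 1 0) * hT

end CommRing

section Field

variable {F : Type*} [Field F]

theorem unipotent_mul_mul_ne_smul (h : ¬IsSquare (-1 : F)) {T : Matrix (Fin 2) (Fin 2) F}
    (hT : T.det = 1) (x : F) : !![1, 1; 0, 1] * T * !![1, 1; 0, 1] ≠ x • T := by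
  obtain ⟨a, b, c, d, rfl⟩ : ∃ a b c d, T = !![a, b; c, d] := ⟨_, _, _, _, eta_fin_two T⟩
  rw [det_fin_two_of] at hT
  intro hx
  obtain ⟨e00, e01, e10, -⟩ :
      a + c = x * a ∧ a + c + (b + d) = x * b ∧ c = x * c ∧ c + d = x * d := by
    simpa [and_assoc] using hx
  by_cases hx1 : x = 1
  · subst hx1
    have hc : c = 0 := by linear_combination e00
    have hd : d = -a := by linear_combination e01 - e00
    exact h ⟨a, by linear_combination hT - a * hd + b * hc⟩
  · have hx1' : x - 1 ≠ 0 := sub_ne_zero.mpr hx1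
    have hc : c = 0 :=
      (mul_eq_zero.mp (by linear_combination -e10 : (x - 1) * c = 0)).resolve_left hx1'
    have ha : a = 0 :=
      (mul_eq_zero.mp (by linear_combination hc - e00 : (x - 1) * a = 0)).resolve_left hx1'
    simp [ha, hc] at hT

theorem exists_trace_eq_zero_of_isSquare_neg_one (h : IsSquare (-1 : F))
    {G : Matrix (Fin 2) (Fin 2) F} (hG : G.det = 1) :
    ∃ T : Matrix (Fin 2) (Fin 2) F,
      T.det = 1 ∧ T.trace = 0 ∧ (T * G).trace = 0 ∧ (T 0 1 ≠ 0 ∨ T 1 0 ≠ 0) := by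
  obtain ⟨i, hi⟩ := h
  have hi0 : i ≠ 0 := by rintro rfl; simp at hi
  obtain ⟨p, r, s, u, rfl⟩ : ∃ p r s u, G = !![p, r; s, u] := ⟨_, _, _, _, eta_fin_two G⟩
  rw [det_fin_two_of] at hG
  -- The first (resp. second) row of `T / i` is that of `G`; `tr (T * G) = 0` then fixes the other.
  obtain hr | rfl := ne_or_eq r 0
  · refine ⟨i • !![p, r; (1 - p ^ 2) / r, -p], ?_, by simp [trace_fin_two_of], ?_,
      by simp [hr, hi0]⟩
    · rw [det_smul, det_fin_two_of, Fintype.card_fin]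
      field_simp
      linear_combination hi
    · rw [smul_mul_assoc, trace_smul, mul_fin_two, trace_fin_two_of, smul_eq_mul]
      field_simp
      linear_combination -i * hG
  obtain hs | rfl := ne_or_eq s 0
  · refine ⟨i • !![-u, (1 - u ^ 2) / s; s, u], ?_, by simp [trace_fin_two_of], ?_,
      by simp [hs, hi0]⟩
    · rw [det_smul, det_fin_two_of, Fintype.card_fin]
      field_simp
      linear_combination hi
    · rw [smul_mul_assoc, trace_smul, mul_fin_two, trace_fin_two_of, smul_eq_mul]
      field_simp
      linear_combination -i * hG
  refine ⟨i • !![0, 1; 1, 0], ?_, by simp [trace_fin_two_of], by simp [trace_fin_two_of],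
    by simp [hi0]⟩
  rw [det_smul, det_fin_two_of, Fintype.card_fin]
  linear_combination hi

end Field

namespace SpecialLinearGroup

def unipotent (R : Type*) [CommRing R] : SpecialLinearGroup (Fin 2) R :=
  ⟨!![1, 1; 0, 1], by simp [det_fin_two_of]⟩

theorem apply_eq_zero_of_mem_center {n R : Type*} [Fintype n] [DecidableEq n] [CommRing R]
    {A : SpecialLinearGroup n R} (hA : A ∈ Subgroup.center (SpecialLinearGroup n R)) {i j : n}
    (hij : i ≠ j) : A i j = 0 := by
  rw [← scalar_eq_self_of_mem_center hA i]
  simp [hij]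

end SpecialLinearGroup

namespace ProjectiveSpecialLinearGroup

section CommRing

variable {n R : Type*} [Fintype n] [DecidableEq n] [CommRing R]

theorem exists_smul_eq_of_mk_eq_mk {A B : SpecialLinearGroup n R}
    (h : (A : ProjectiveSpecialLinearGroup n R) = B) :
    ∃ x : R, (B : Matrix n n R) = x • (A : Matrix n n R) := by
  obtain ⟨x, -, hx⟩ := SpecialLinearGroup.mem_center_iff.mp (QuotientGroup.eq.mp h)
  refine ⟨x, ?_⟩
  calc (B : Matrix n n R) = ↑(A * (A⁻¹ * B)) := by rw [mul_inv_cancel_left]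
    _ = x • (A : Matrix n n R) := by
      rw [SpecialLinearGroup.coe_mul, ← hx, scalar_apply, ← smul_eq_mul_diagonal]

theorem mk_ne_one_of_apply_ne_zero {A : SpecialLinearGroup n R} {i j : n} (hij : i ≠ j)
    (hA : A i j ≠ 0) : (A : ProjectiveSpecialLinearGroup n R) ≠ 1 := by
  rw [Ne, QuotientGroup.eq_one_iff]
  exact fun hc => hA (SpecialLinearGroup.apply_eq_zero_of_mem_center hc hij)

theorem mk_sq_eq_one_of_trace_eq_zero {A : SpecialLinearGroup (Fin 2) R}
    (hA : (A : Matrix (Fin 2) (Fin 2) R).trace = 0) :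
    (A : ProjectiveSpecialLinearGroup (Fin 2) R) ^ 2 = 1 := by
  rw [← QuotientGroup.mk_pow, QuotientGroup.eq_one_iff, SpecialLinearGroup.mem_center_iff]
  refine ⟨-1, by norm_num, ?_⟩
  rw [SpecialLinearGroup.coe_pow, sq, mul_self_eq_neg_one_of_trace_eq_zero A.det_coe hA,
    map_neg, map_one]

end CommRing

section Field

variable {F : Type*} [Field F]

theorem exists_involution_inv_mul_mul_eq_inv (h : IsSquare (-1 : F))
    (g : ProjectiveSpecialLinearGroup (Fin 2) F) :
    ∃ t : ProjectiveSpecialLinearGroup (Fin 2) F, t ^ 2 = 1 ∧ t ≠ 1 ∧ t⁻¹ * g * t = g⁻¹ := by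
  obtain ⟨G, rfl⟩ := QuotientGroup.mk_surjective g
  obtain ⟨T, hdet, htr, htrG, hoff⟩ := exists_trace_eq_zero_of_isSquare_neg_one h G.det_coe
  let T' : SpecialLinearGroup (Fin 2) F := ⟨T, hdet⟩
  refine ⟨T', mk_sq_eq_one_of_trace_eq_zero htr, ?_, ?_⟩
  · rcases hoff with h01 | h10
    · exact mk_ne_one_of_apply_ne_zero (by decide) h01
    · exact mk_ne_one_of_apply_ne_zero (by decide) h10
  · rw [inv_mul_mul_eq_inv_iff, ← QuotientGroup.mk_mul, ← QuotientGroup.mk_mul]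
    congr 1
    exact Subtype.ext (mul_mul_eq_self_of_trace_mul_eq_zero G.det_coe htr htrG)

theorem inv_mul_mul_ne_inv_unipotent (h : ¬IsSquare (-1 : F))
    (t : ProjectiveSpecialLinearGroup (Fin 2) F) :
    t⁻¹ * (SpecialLinearGroup.unipotent F : ProjectiveSpecialLinearGroup (Fin 2) F) * t ≠
      (SpecialLinearGroup.unipotent F : ProjectiveSpecialLinearGroup (Fin 2) F)⁻¹ := by
  obtain ⟨T, rfl⟩ := QuotientGroup.mk_surjective t
  rw [Ne, inv_mul_mul_eq_inv_iff, ← QuotientGroup.mk_mul, ← QuotientGroup.mk_mul]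
  intro hT
  obtain ⟨x, hx⟩ := exists_smul_eq_of_mk_eq_mk hT.symm
  exact unipotent_mul_mul_ne_smul h T.det_coe x hx

end Field

end ProjectiveSpecialLinearGroup

end Matrix

theorem psl2_strongly_real_iff_general {q : ℕ}
    (F : Type*) [Field F] [Fintype F] (hF : Fintype.card F = q) :
    (∀ g : ProjectiveSpecialLinearGroup (Fin 2) F,
        ∃ t : ProjectiveSpecialLinearGroup (Fin 2) F,
          t ^ 2 = 1 ∧ t ≠ 1 ∧ t⁻¹ * g * t = g⁻¹) ↔ q % 4 ≠ 3 := by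
  rw [← hF, ← FiniteField.isSquare_neg_one_iff]
  refine ⟨fun hsr => ?_, ProjectiveSpecialLinearGroup.exists_involution_inv_mul_mul_eq_inv⟩
  by_contra h
  obtain ⟨t, -, -, ht⟩ := hsr (SpecialLinearGroup.unipotent F)
  exact ProjectiveSpecialLinearGroup.inv_mul_mul_ne_inv_unipotent h t ht

/-- `PSL₂(F_q)` is strongly real if and only if `q ≢ 3 (mod 4)`. -/
theorem psl2_strongly_real_iff {q : ℕ} (hq : IsPrimePow q)
    (F : Type*) [Field F] [Fintype F] [DecidableEq F] (hF : Fintype.card F = q) :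
    (∀ g : ProjectiveSpecialLinearGroup (Fin 2) F,
        ∃ t : ProjectiveSpecialLinearGroup (Fin 2) F,
          t ^ 2 = 1 ∧ t ≠ 1 ∧ t⁻¹ * g * t = g⁻¹) ↔ q % 4 ≠ 3 :=
  psl2_strongly_real_iff_general F hF
end

section
/- Let q be a prime power and let F be a finite field with q elements. Then the projective general linear group PGL₂(F) = GL₂(F)/Z(GL₂(F)) is strongly real: every element of PGL₂(F) is conjugate to its inverse by an involution of PGL₂(F). -/
/-!
A `2 × 2` matrix `T` of trace zero satisfies `T² = -det T`, and for any `A` one has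
`A T A = tr(AT) A - det A · adj T` with `adj T = -T`. So an invertible, non-scalar, trace-zero `T`
with `tr(AT) = 0` gives an involution of `PGL₂(F)` with `T⁻¹ A T = det A · A⁻¹ ≡ A⁻¹`. Both trace
conditions are linear in `T`, and a short case analysis on the entries of `A` finds an invertible,
non-scalar solution.
-/

open Matrix

/-- The projective general linear group `PGL₂(F) = GL₂(F)/Z(GL₂(F))`. -/
abbrev ProjectiveGeneralLinearGroup2 (F : Type*) [Field F] [DecidableEq F] : Type _ :=
  GeneralLinearGroup (Fin 2) F ⧸ Subgroup.center (GeneralLinearGroup (Fin 2) F)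

namespace Matrix

section CommRing

variable {R : Type*} [CommRing R]

theorem mul_mul_eq_trace_mul_smul_sub_det_smul_adjugate (A T : Matrix (Fin 2) (Fin 2) R) :
    A * T * A = (A * T).trace • A - A.det • T.adjugate := by
  rw [eta_fin_two A, eta_fin_two T]
  ext i j
  fin_cases i <;> fin_cases j <;>
    simp [trace_fin_two, det_fin_two, adjugate_fin_two, mul_apply, Fin.sum_univ_two] <;> ring

theorem adjugate_eq_neg_of_trace_eq_zero {T : Matrix (Fin 2) (Fin 2) R} (hT : T.trace = 0) :
    T.adjugate = -T := by
  rw [trace_fin_two] at hT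
  ext i j
  fin_cases i <;> fin_cases j <;> simp [adjugate_fin_two] <;> linear_combination hT

theorem mul_self_eq_neg_det_smul_one_of_trace_eq_zero {T : Matrix (Fin 2) (Fin 2) R}
    (hT : T.trace = 0) : T * T = -T.det • 1 := by
  rw [neg_smul, ← mul_adjugate, adjugate_eq_neg_of_trace_eq_zero hT, mul_neg, neg_neg]

theorem mul_mul_eq_det_smul_of_trace_eq_zero {A T : Matrix (Fin 2) (Fin 2) R}
    (hT : T.trace = 0) (hAT : (A * T).trace = 0) : A * T * A = A.det • T := by
  rw [mul_mul_eq_trace_mul_smul_sub_det_smul_adjugate, hAT, adjugate_eq_neg_of_trace_eq_zero hT,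
    zero_smul, zero_sub, smul_neg, neg_neg]

end CommRing

theorem notMem_range_scalar_of_apply_ne_zero {n R : Type*} [Fintype n] [DecidableEq n]
    [Semiring R] {T : Matrix n n R} {i j : n} (hij : i ≠ j) (hT : T i j ≠ 0) :
    T ∉ Set.range (scalar n) := by
  rintro ⟨r, rfl⟩
  simp [hij] at hT

/- Non-scalarity is not automatic: in characteristic `2` the scalar matrix `1` has trace zero. -/
theorem exists_trace_eq_zero_trace_mul_eq_zero {F : Type*} [Field F]
    (A : Matrix (Fin 2) (Fin 2) F) :
    ∃ T : Matrix (Fin 2) (Fin 2) F, T.trace = 0 ∧ (A * T).trace = 0 ∧ T.det ≠ 0 ∧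
      T ∉ Set.range (scalar (Fin 2)) := by
  obtain ⟨a, b, c, d, rfl⟩ : ∃ a b c d, A = !![a, b; c, d] := ⟨_, _, _, _, eta_fin_two A⟩
  have h01 (T : Matrix (Fin 2) (Fin 2) F) : T 0 1 ≠ 0 → T ∉ Set.range (scalar (Fin 2)) :=
    notMem_range_scalar_of_apply_ne_zero (by decide)
  have h10 (T : Matrix (Fin 2) (Fin 2) F) : T 1 0 ≠ 0 → T ∉ Set.range (scalar (Fin 2)) :=
    notMem_range_scalar_of_apply_ne_zero (by decide)
  have hsub : a ≠ d → d - a ≠ 0 := fun h ↦ sub_ne_zero.mpr h.symm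
  by_cases hb : b = 0 <;> by_cases hc : c = 0
  · refine ⟨!![0, 1; 1, 0], ?_, ?_, ?_, h01 _ (by simp)⟩ <;>
      simp [trace_fin_two, det_fin_two, hb, hc]
  · by_cases hda : a = d
    · refine ⟨!![1, 0; 1, -1], ?_, ?_, ?_, h10 _ (by simp)⟩ <;>
        simp [trace_fin_two, det_fin_two, hb, hda]
    · refine ⟨!![c, d - a; 0, -c], by simp [trace_fin_two], ?_, by simp [det_fin_two, hc],
        h01 _ (by simpa using hsub hda)⟩
      rw [mul_fin_two, trace_fin_two_of]
      ring
  · by_cases hda : a = d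
    · refine ⟨!![1, 1; 0, -1], ?_, ?_, ?_, h01 _ (by simp)⟩ <;>
        simp [trace_fin_two, det_fin_two, hc, hda]
    · refine ⟨!![b, 0; d - a, -b], by simp [trace_fin_two], ?_, by simp [det_fin_two, hb],
        h10 _ (by simpa using hsub hda)⟩
      rw [mul_fin_two, trace_fin_two_of]
      ring
  · refine ⟨!![0, b; -c, 0], by simp [trace_fin_two], ?_, by simp [det_fin_two, hb, hc],
      h01 _ (by simpa using hb)⟩
    rw [mul_fin_two, trace_fin_two_of]
    ring

end Matrix

namespace Matrix.GeneralLinearGroup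

variable {n R : Type*} [Fintype n] [DecidableEq n] [CommRing R]

theorem mk_eq_one_iff_val_mem_range_scalar {g : GL n R} :
    (g : GL n R ⧸ Subgroup.center (GL n R)) = 1 ↔
      (g : Matrix n n R) ∈ Set.range (Matrix.scalar n) := by
  rw [QuotientGroup.eq_one_iff, mem_center_iff_val_mem_range_scalar]

theorem inv_mul_mul_mul_mem_center {a t : GL n R} {r : R}
    (h : (a : Matrix n n R) * t * a = r • (t : Matrix n n R)) :
    t⁻¹ * a * t * a ∈ Subgroup.center (GL n R) := by
  refine mem_center_iff_val_mem_range_scalar.mpr ⟨r, Eq.symm ?_⟩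
  calc ((t⁻¹ * a * t * a : GL n R) : Matrix n n R) = ↑t⁻¹ * (a * t * a : Matrix n n R) := by
        simp only [Units.val_mul, mul_assoc]
    _ = Matrix.scalar n r := by
        rw [h, mul_smul_comm, Units.inv_mul, smul_one_eq_diagonal, scalar_apply]

end Matrix.GeneralLinearGroup

theorem pgl2_strongly_real_general
    (F : Type*) [Field F] [DecidableEq F] :
    ∀ g : ProjectiveGeneralLinearGroup2 F,
      ∃ t : ProjectiveGeneralLinearGroup2 F,
        t ^ 2 = 1 ∧ t ≠ 1 ∧ t⁻¹ * g * t = g⁻¹ := by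
  intro g
  obtain ⟨a, rfl⟩ := QuotientGroup.mk_surjective g
  obtain ⟨T, hT, haT, hdet, hT_nonscalar⟩ :=
    exists_trace_eq_zero_trace_mul_eq_zero (a : Matrix (Fin 2) (Fin 2) F)
  obtain ⟨t, rfl⟩ : IsUnit T := (isUnit_iff_isUnit_det T).mpr hdet.isUnit
  refine ⟨t, ?_, ?_, ?_⟩
  · rw [← QuotientGroup.mk_pow, GeneralLinearGroup.mk_eq_one_iff_val_mem_range_scalar, pow_two,
      Units.val_mul, mul_self_eq_neg_det_smul_one_of_trace_eq_zero hT]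
    exact ⟨_, (smul_one_eq_diagonal _).symm⟩
  · rwa [Ne, GeneralLinearGroup.mk_eq_one_iff_val_mem_range_scalar]
  · rw [eq_inv_iff_mul_eq_one, ← QuotientGroup.mk_inv, ← QuotientGroup.mk_mul,
      ← QuotientGroup.mk_mul, ← QuotientGroup.mk_mul, QuotientGroup.eq_one_iff]
    exact GeneralLinearGroup.inv_mul_mul_mul_mem_center
      (mul_mul_eq_det_smul_of_trace_eq_zero hT haT)

/-- `PGL₂(F_q)` is strongly real: every element is conjugate to its inverse by an
involution. -/
theorem pgl2_strongly_real {q : ℕ} (hq : IsPrimePow q)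
    (F : Type*) [Field F] [Fintype F] [DecidableEq F] (hF : Fintype.card F = q) :
    ∀ g : ProjectiveGeneralLinearGroup2 F,
      ∃ t : ProjectiveGeneralLinearGroup2 F,
        t ^ 2 = 1 ∧ t ≠ 1 ∧ t⁻¹ * g * t = g⁻¹ :=
  pgl2_strongly_real_general F
end

section
/- Every element of the alternating group A₁₀ on 10 letters is a product of two involutions of A₁₀, and every element of the alternating group A₁₄ on 14 letters is a product of two involutions of A₁₄. -/
/-!
An element `g` with `g ^ 2 ≠ 1` is a product of two involutions as soon as some involution `s`
inverts it by conjugation: then `g = s * (s * g)`. In `Aₙ` we need such an `s` that is even.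

Every permutation is inverted by an involution supported on its support, assembled cycle by cycle
from the reflection `i ↦ k - 1 - i` of a `k`-cycle, whose sign is `(-1) ^ (k / 2)`. The sign can
be flipped when `g` has a cycle `c` of even length (replace its reflection `r` by `c * r`), two
cycles of the same odd length (use instead the involution interchanging them), or two fixed points
(multiply by their transposition). Otherwise the cycles of `g` have distinct odd lengths and `g`
fixes at most one point; for `n = 10` or `n = 14` this leaves at most two cycles (as
`3 + 5 + 7 > 14`), and then `∑ k / 2 = (n - 2) / 2` is even.

An involution `g` (possibly `1`) is handled by an even involution `s ∉ {1, g}` commuting with it,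
which exists once `n ≥ 6`.
-/

open Equiv Finset

section Group

variable {G : Type*} [Group G]

def IsProductOfTwoInvolutions (g : G) : Prop :=
  ∃ s t : G, s ^ 2 = 1 ∧ s ≠ 1 ∧ t ^ 2 = 1 ∧ t ≠ 1 ∧ g = s * t

theorem isProductOfTwoInvolutions_of_sq_eq_one {s g : G} (hs : s ^ 2 = 1) (hs₁ : s ≠ 1)
    (hsg : (s * g) ^ 2 = 1) (hsg₁ : s * g ≠ 1) : IsProductOfTwoInvolutions g :=
  ⟨s, s * g, hs, hs₁, hsg, hsg₁, by rw [← mul_assoc, ← sq, hs, one_mul]⟩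

theorem isProductOfTwoInvolutions_of_conj_eq_inv {s g : G} (hs : s ^ 2 = 1)
    (hsg : s * g * s⁻¹ = g⁻¹) (hg : g ^ 2 ≠ 1) : IsProductOfTwoInvolutions g := by
  rw [inv_eq_of_mul_eq_one_right (by rw [← sq, hs])] at hsg
  refine isProductOfTwoInvolutions_of_sq_eq_one hs ?_ ?_ ?_
  · rintro rfl
    exact hg (by rw [sq, mul_eq_one_iff_eq_inv]; simpa using hsg)
  · rw [sq, ← mul_assoc, hsg, inv_mul_cancel]
  · intro h
    rw [eq_inv_of_mul_eq_one_left h, inv_pow, inv_eq_one] at hs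
    exact hg hs

theorem isProductOfTwoInvolutions_of_commute {s g : G} (hs : s ^ 2 = 1) (hg : g ^ 2 = 1)
    (hsg : Commute s g) (hs₁ : s ≠ 1) (hsg₁ : s ≠ g) : IsProductOfTwoInvolutions g := by
  refine isProductOfTwoInvolutions_of_sq_eq_one hs hs₁ (by rw [hsg.mul_pow, hs, hg, one_mul]) ?_
  intro h
  exact hsg₁ (by rw [eq_inv_of_mul_eq_one_left h, inv_eq_of_mul_eq_one_right (by rw [← sq, hg])])

end Group

namespace Multiset

theorem two_mul_sum_map_div_two_add_card {T : Multiset ℕ} (hT : ∀ k ∈ T, Odd k) :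
    2 * (T.map (· / 2)).sum + card T = T.sum := by
  induction T using Multiset.induction_on with
  | empty => simp
  | cons k T ih =>
    have hk := Nat.odd_iff.1 (hT k (mem_cons_self k T))
    have := ih fun j hj => hT j (mem_cons_of_mem hj)
    simp only [map_cons, sum_cons, card_cons]
    omega

theorem card_le_two_of_sum_lt_fifteen {T : Multiset ℕ} (hT : T.Nodup) (hodd : ∀ k ∈ T, Odd k)
    (htwo : ∀ k ∈ T, 2 ≤ k) (hsum : T.sum < 15) : card T ≤ 2 := by
  by_contra! h
  rw [← hT.dedup, ← toFinset_val, Finset.card_val] at h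
  obtain ⟨a, ha, b, hb, c, hc, hab, hac, hbc⟩ := two_lt_card.1 h
  simp only [mem_toFinset] at ha hb hc
  have := Nat.odd_iff.1 (hodd a ha)
  have := Nat.odd_iff.1 (hodd b hb)
  have := Nat.odd_iff.1 (hodd c hc)
  have := htwo a ha
  have := htwo b hb
  have := htwo c hc
  have : a + b + c ≤ T.sum :=
    calc a + b + c = ∑ k ∈ {a, b, c}, k := by simp [hab, hac, hbc, add_assoc]
      _ ≤ ∑ k ∈ T.toFinset, k := sum_le_sum_of_subset (by simp [insert_subset_iff, ha, hb, hc])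
      _ = T.sum := by rw [Finset.sum, toFinset_val, hT.dedup, map_id']
  omega

end Multiset

namespace Equiv.Perm

section Swap

variable {α : Type*} [DecidableEq α]

theorem swap_disjoint_of_apply_eq {p : Perm α} {a b : α} (ha : p a = a) (hb : p b = b) :
    (swap a b).Disjoint p := by
  intro x
  by_cases hxa : x = a
  · exact Or.inr (hxa ▸ ha)
  by_cases hxb : x = b
  · exact Or.inr (hxb ▸ hb)
  exact Or.inl (swap_apply_of_ne_of_ne hxa hxb)

end Swap

variable {α β : Type*} [Fintype α] [DecidableEq α] [Fintype β] [DecidableEq β]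

theorem sign_eq_neg_one_pow_card_support_div_two {σ : Perm α} (hσ : σ ^ 2 = 1) :
    sign σ = (-1) ^ (#σ.support / 2) := by
  rw [sign_of_pow_two_eq_one hσ, card_fixedPoints, sum_cycleType,
    Nat.sub_sub_self (card_le_univ _)]

theorem cycleType_viaFintypeEmbedding (σ : Perm β) (f : β ↪ α) :
    (σ.viaFintypeEmbedding f).cycleType = σ.cycleType :=
  cycleType_extendDomain _

theorem sumCongr_one_eq_viaFintypeEmbedding {γ : Type*} [DecidableEq γ] (σ : Perm β) :
    sumCongr σ (1 : Perm γ) = σ.viaFintypeEmbedding (Function.Embedding.inl : β ↪ β ⊕ γ) := by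
  ext (b | c)
  · exact (σ.viaFintypeEmbedding_apply_image (Function.Embedding.inl : β ↪ β ⊕ γ) b).symm
  · simp [viaFintypeEmbedding_apply_notMem_range]

theorem one_sumCongr_eq_viaFintypeEmbedding {γ : Type*} [DecidableEq γ] (σ : Perm β) :
    sumCongr (1 : Perm γ) σ = σ.viaFintypeEmbedding (Function.Embedding.inr : β ↪ γ ⊕ β) := by
  ext (c | b)
  · simp [viaFintypeEmbedding_apply_notMem_range]
  · exact (σ.viaFintypeEmbedding_apply_image (Function.Embedding.inr : β ↪ γ ⊕ β) b).symm

theorem cycleType_sumCongr {γ : Type*} [Fintype γ] [DecidableEq γ] (σ : Perm β) (τ : Perm γ) :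
    (sumCongr σ τ).cycleType = σ.cycleType + τ.cycleType := by
  have hd : (sumCongr σ 1).Disjoint (sumCongr 1 τ) := by
    rintro (b | c) <;> simp
  rw [show sumCongr σ τ = sumCongr σ 1 * sumCongr 1 τ by rw [sumCongr_mul, mul_one, one_mul],
    hd.cycleType_mul, sumCongr_one_eq_viaFintypeEmbedding, one_sumCongr_eq_viaFintypeEmbedding,
    cycleType_viaFintypeEmbedding, cycleType_viaFintypeEmbedding]

/-- The support condition is what lets reversing involutions of disjoint permutations
be multiplied. -/
structure IsReversingInvolution (s g : Perm α) : Prop where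
  sq_eq_one : s ^ 2 = 1
  conj_eq_inv : s * g * s⁻¹ = g⁻¹
  support_subset : s.support ⊆ g.support

namespace IsReversingInvolution

variable {s g t h : Perm α}

theorem conj (hs : IsReversingInvolution s g) (m : Perm α) :
    IsReversingInvolution (m * s * m⁻¹) (m * g * m⁻¹) where
  sq_eq_one := by
    rw [show (m * s * m⁻¹) ^ 2 = m * s ^ 2 * m⁻¹ by rw [sq, sq]; group, hs.sq_eq_one]; group
  conj_eq_inv := by
    rw [show m * s * m⁻¹ * (m * g * m⁻¹) * (m * s * m⁻¹)⁻¹ = m * (s * g * s⁻¹) * m⁻¹ by group,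
      hs.conj_eq_inv]; group
  support_subset := by
    rw [support_conj, support_conj]; exact map_subset_map.2 hs.support_subset

theorem extendDomain {s g : Perm β} (hs : IsReversingInvolution s g) {p : α → Prop}
    [DecidablePred p] (f : β ≃ Subtype p) :
    IsReversingInvolution (s.extendDomain f) (g.extendDomain f) where
  sq_eq_one := by rw [← extendDomainHom_apply, ← map_pow, hs.sq_eq_one, map_one]
  conj_eq_inv := by
    rw [extendDomain_inv, extendDomain_mul, extendDomain_mul, hs.conj_eq_inv, extendDomain_inv]
  support_subset := by
    rw [support_extend_domain, support_extend_domain]; exact map_subset_map.2 hs.support_subset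

theorem mul (hs : IsReversingInvolution s g) (ht : IsReversingInvolution t h)
    (hgh : g.Disjoint h) : IsReversingInvolution (s * t) (g * h) := by
  have hsh : s.Disjoint h := hgh.mono hs.support_subset le_rfl
  have htg : t.Disjoint g := hgh.symm.mono ht.support_subset le_rfl
  have hst : s.Disjoint t := (hsh.symm.mono ht.support_subset le_rfl).symm
  refine ⟨?_, ?_, ?_⟩
  · rw [hst.commute.mul_pow, hs.sq_eq_one, ht.sq_eq_one, one_mul]
  · have hg : s * t * g * (s * t)⁻¹ = s * g * s⁻¹ := by
      rw [mul_assoc s, htg.commute.eq]; group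
    have hh : s * t * h * (s * t)⁻¹ = t * h * t⁻¹ := by
      rw [hst.commute.eq, mul_assoc t, hsh.commute.eq]; group
    calc s * t * (g * h) * (s * t)⁻¹ = (s * t * g * (s * t)⁻¹) * (s * t * h * (s * t)⁻¹) := by
          group
      _ = (g * h)⁻¹ := by
          rw [hg, hh, hs.conj_eq_inv, ht.conj_eq_inv, ← mul_inv_rev, hgh.commute.eq]
  · rw [hgh.support_mul]
    exact (support_mul_le s t).trans (sup_le_sup hs.support_subset ht.support_subset)

theorem mul_left_self (hs : IsReversingInvolution s g) : IsReversingInvolution (g * s) g where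
  sq_eq_one := by
    rw [sq, show g * s * (g * s) = g * (s * g * s⁻¹) * (s * s) by group, hs.conj_eq_inv,
      ← sq, hs.sq_eq_one]; group
  conj_eq_inv := by
    rw [mul_inv_rev, show g * s * g * (s⁻¹ * g⁻¹) = g * (s * g * s⁻¹) * g⁻¹ by group,
      hs.conj_eq_inv]; group
  support_subset := (support_mul_le g s).trans (sup_le le_rfl hs.support_subset)

theorem mul_swap (hs : IsReversingInvolution s g) {a b : α} (ha : g a = a) (hb : g b = b) :
    (s * swap a b) ^ 2 = 1 ∧ s * swap a b * g * (s * swap a b)⁻¹ = g⁻¹ := by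
  have hg : (swap a b).Disjoint g := swap_disjoint_of_apply_eq ha hb
  have hs' : (swap a b).Disjoint s := hg.mono le_rfl hs.support_subset
  refine ⟨by rw [hs'.commute.symm.mul_pow, hs.sq_eq_one, sq, swap_mul_self, one_mul], ?_⟩
  rw [mul_inv_rev, show s * swap a b * g * ((swap a b)⁻¹ * s⁻¹) =
    s * (swap a b * g * (swap a b)⁻¹) * s⁻¹ by group, hg.commute.eq, mul_inv_cancel_right,
    hs.conj_eq_inv]

end IsReversingInvolution

def IsReversibleWithSign (g : Perm α) (ε : ℤˣ) : Prop :=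
  ∃ s, IsReversingInvolution s g ∧ sign s = ε

theorem IsReversibleWithSign.of_cycleType_eq {g₀ : Perm β} {ε : ℤˣ}
    (h₀ : IsReversibleWithSign g₀ ε) (hβ : Fintype.card β ≤ Fintype.card α) {g : Perm α}
    (hg : g.cycleType = g₀.cycleType) : IsReversibleWithSign g ε := by
  obtain ⟨s, hs, rfl⟩ := h₀
  obtain ⟨e⟩ := Function.Embedding.nonempty_of_card_le hβ
  obtain ⟨m, rfl⟩ := isConj_iff.1 <| isConj_of_cycleType_eq <|
    (cycleType_extendDomain e.toEquivRange).trans hg.symm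
  exact ⟨_, (hs.extendDomain e.toEquivRange).conj m,
    by simp [sign_extendDomain, mul_right_comm _ (sign s), Int.units_mul_self]⟩

theorem IsReversibleWithSign.mul {g h : Perm α} {ε δ : ℤˣ} (hg : IsReversibleWithSign g ε)
    (hh : IsReversibleWithSign h δ) (hgh : g.Disjoint h) :
    IsReversibleWithSign (g * h) (ε * δ) :=
  let ⟨s, hs, hsε⟩ := hg
  let ⟨t, ht, htδ⟩ := hh
  ⟨s * t, hs.mul ht hgh, by rw [map_mul, hsε, htδ]⟩

theorem IsReversibleWithSign.sign_mul {g : Perm α} {ε : ℤˣ} (hg : IsReversibleWithSign g ε) :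
    IsReversibleWithSign g (sign g * ε) :=
  let ⟨s, hs, hsε⟩ := hg
  ⟨g * s, hs.mul_left_self, by rw [map_mul, hsε]⟩

theorem revPerm_sq (k : ℕ) : (Fin.revPerm : Perm (Fin k)) ^ 2 = 1 := by
  ext; simp [sq]

theorem revPerm_mul_finRotate_mul_revPerm_inv (k : ℕ) :
    Fin.revPerm * finRotate k * Fin.revPerm⁻¹ = (finRotate k)⁻¹ := by
  rcases k with _ | k
  · exact Subsingleton.elim _ _
  rw [eq_inv_iff_mul_eq_one, ← Fin.revPerm_symm]
  ext i
  simp [finRotate_apply, Fin.val_add, Fin.val_rev]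
  rcases (Fin.is_le i).lt_or_eq with hi | hi
  · rw [Nat.mod_eq_of_lt (by omega : (i : ℕ) + 1 < k + 1), Nat.mod_eq_of_lt (by omega)]; omega
  · simp [hi]

theorem card_support_revPerm (k : ℕ) :
    #(Fin.revPerm : Perm (Fin k)).support = 2 * (k / 2) := by
  obtain ⟨j, rfl | rfl⟩ := Nat.even_or_odd' k
  · have : (Fin.revPerm : Perm (Fin (2 * j))).support = univ := by
      ext i; simp [Fin.ext_iff, Fin.val_rev]; omega
    simp [this]
  · have : (Fin.revPerm : Perm (Fin (2 * j + 1))).support = univ.erase ⟨j, by omega⟩ := by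
      ext i; simp [Fin.ext_iff, Fin.val_rev]; omega
    rw [this, card_erase_of_mem (mem_univ _)]; simp; omega

theorem sign_revPerm (k : ℕ) : sign (Fin.revPerm : Perm (Fin k)) = (-1) ^ (k / 2) := by
  rw [sign_eq_neg_one_pow_card_support_div_two (revPerm_sq k), card_support_revPerm,
    Nat.mul_div_cancel_left _ two_pos]

theorem isReversibleWithSign_finRotate {k : ℕ} (hk : 2 ≤ k) :
    IsReversibleWithSign (finRotate k) ((-1) ^ (k / 2)) :=
  ⟨Fin.revPerm, ⟨revPerm_sq k, revPerm_mul_finRotate_mul_revPerm_inv k,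
    support_finRotate_of_le hk ▸ subset_univ _⟩, sign_revPerm k⟩

theorem isReversibleWithSign_sumCongr_finRotate {k : ℕ} (hk : 2 ≤ k) :
    IsReversibleWithSign (sumCongr (finRotate k) (finRotate k)) ((-1) ^ k) := by
  set x : Perm (Fin k ⊕ Fin k) := (Equiv.sumComm _ _ : Perm _) * sumCongr Fin.revPerm Fin.revPerm
  have hx : x ^ 2 = 1 := by
    ext (i | i) <;> simp [x, sq]
  have hsupp : x.support = univ := by
    ext (i | i) <;> simp [x]
  have hrev := mul_inv_eq_iff_eq_mul.1 (revPerm_mul_finRotate_mul_revPerm_inv k)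
  refine ⟨x, ⟨hx, ?_, ?_⟩, ?_⟩
  · rw [mul_inv_eq_iff_eq_mul]
    ext (i | i) <;> simpa [x] using Perm.ext_iff.1 hrev i
  · have hrot (i : Fin k) : finRotate k i ≠ i := by
      rw [← mem_support, support_finRotate_of_le hk]; exact mem_univ i
    rw [hsupp]
    rintro (i | i) - <;> simpa using hrot i
  · rw [sign_eq_neg_one_pow_card_support_div_two hx, hsupp, card_univ, Fintype.card_sum,
      Fintype.card_fin, ← two_mul, Nat.mul_div_cancel_left _ two_pos]

theorem IsCycle.isReversibleWithSign {c : Perm α} (hc : c.IsCycle) :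
    IsReversibleWithSign c ((-1) ^ (#c.support / 2)) :=
  (isReversibleWithSign_finRotate hc.two_le_card_support).of_cycleType_eq
    (by simpa using card_le_univ c.support)
    (by rw [hc.cycleType, cycleType_finRotate_of_le hc.two_le_card_support])

theorem IsCycle.isReversibleWithSign_mul {c d : Perm α} (hc : c.IsCycle) (hd : d.IsCycle)
    (hcd : c.Disjoint d) (hcard : #c.support = #d.support) :
    IsReversibleWithSign (c * d) ((-1) ^ #c.support) := by
  refine (isReversibleWithSign_sumCongr_finRotate hc.two_le_card_support).of_cycleType_eq ?_ ?_
  · have := card_le_univ (c * d).support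
    rw [hcd.support_mul, card_union_of_disjoint (disjoint_iff_disjoint_support.1 hcd)] at this
    simpa [hcard] using this
  · rw [hcd.cycleType_mul, hc.cycleType, hd.cycleType, cycleType_sumCongr,
      cycleType_finRotate_of_le hc.two_le_card_support, hcard]

/-- `(-1) ^ g.cycleTypeHalfSum` is the sign of the reversing involution of `g` that reflects
each cycle. -/
def cycleTypeHalfSum (g : Perm α) : ℕ :=
  (g.cycleType.map (· / 2)).sum

theorem Disjoint.cycleTypeHalfSum_mul {g h : Perm α} (hgh : g.Disjoint h) :
    (g * h).cycleTypeHalfSum = g.cycleTypeHalfSum + h.cycleTypeHalfSum := by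
  simp [cycleTypeHalfSum, hgh.cycleType_mul]

theorem IsCycle.cycleTypeHalfSum {c : Perm α} (hc : c.IsCycle) :
    c.cycleTypeHalfSum = #c.support / 2 := by
  simp [Perm.cycleTypeHalfSum, hc.cycleType]

theorem isReversibleWithSign_cycleTypeHalfSum (g : Perm α) :
    IsReversibleWithSign g ((-1) ^ g.cycleTypeHalfSum) := by
  induction g using cycle_induction_on with
  | base_one => exact ⟨1, ⟨by simp, by simp, by simp⟩, by simp [cycleTypeHalfSum]⟩
  | base_cycles c hc => simpa [hc.cycleTypeHalfSum] using hc.isReversibleWithSign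
  | induction_disjoint g h hgh _ hg hh =>
    simpa [hgh.cycleTypeHalfSum_mul, pow_add] using hg.mul hh hgh

theorem isReversibleWithSign_neg_of_even_mem_cycleType {g : Perm α} {k : ℕ}
    (hk : k ∈ g.cycleType) (hk_even : Even k) :
    IsReversibleWithSign g (-(-1) ^ g.cycleTypeHalfSum) := by
  obtain ⟨c, h, rfl, hch, hc, rfl⟩ := mem_cycleType_iff.1 hk
  have := hc.isReversibleWithSign.sign_mul.mul (isReversibleWithSign_cycleTypeHalfSum h) hch
  convert this using 1
  rw [hc.sign, hk_even.neg_one_pow, hch.cycleTypeHalfSum_mul, hc.cycleTypeHalfSum, pow_add,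
    mul_assoc, neg_one_mul]

theorem isReversibleWithSign_neg_of_not_nodup {g : Perm α} (hg : ¬ g.cycleType.Nodup) :
    IsReversibleWithSign g (-(-1) ^ g.cycleTypeHalfSum) := by
  obtain ⟨k, hk⟩ : ∃ k, 1 < g.cycleType.count k := by
    simpa [Multiset.nodup_iff_count_le_one] using hg
  have hk_mem : k ∈ g.cycleType := Multiset.count_pos.1 (by omega)
  obtain hk_even | hk_odd := Nat.even_or_odd k
  · exact isReversibleWithSign_neg_of_even_mem_cycleType hk_mem hk_even
  obtain ⟨c, h, rfl, hch, hc, rfl⟩ := mem_cycleType_iff.1 hk_mem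
  have hh : #c.support ∈ h.cycleType := by
    rw [hch.cycleType_mul, hc.cycleType, Multiset.singleton_add, Multiset.count_cons_self] at hk
    exact Multiset.count_pos.1 (by omega)
  obtain ⟨d, h', rfl, hdh', hd, hcard⟩ := mem_cycleType_iff.1 hh
  have hcd : c.Disjoint d := hch.mono le_rfl (hdh'.support_mul ▸ subset_union_left)
  have hch' : c.Disjoint h' := hch.mono le_rfl (hdh'.support_mul ▸ subset_union_right)
  have := (hc.isReversibleWithSign_mul hd hcd hcard.symm).mul
    (isReversibleWithSign_cycleTypeHalfSum h') (hch'.mul_left hdh')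
  rw [← mul_assoc]
  convert this using 1
  rw [(hch'.mul_left hdh').cycleTypeHalfSum_mul, hcd.cycleTypeHalfSum_mul, hc.cycleTypeHalfSum,
    hd.cycleTypeHalfSum, hcard, ← two_mul, pow_add, pow_mul, neg_one_sq, one_pow, one_mul,
    hk_odd.neg_one_pow, neg_one_mul]

theorem even_cycleTypeHalfSum {g : Perm α}
    (hα : Fintype.card α = 10 ∨ Fintype.card α = 14) (hodd : ∀ k ∈ g.cycleType, Odd k)
    (hnodup : g.cycleType.Nodup) (hfix : #g.supportᶜ ≤ 1) : Even g.cycleTypeHalfSum := by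
  have hsum := Multiset.two_mul_sum_map_div_two_add_card hodd
  have hsupp := card_le_univ g.support
  rw [card_compl] at hfix
  have hcard := Multiset.card_le_two_of_sum_lt_fifteen hnodup hodd
    (fun k hk => two_le_of_mem_cycleType hk) (by rw [sum_cycleType]; omega)
  have hzero : Multiset.card g.cycleType = 0 → g.cycleType.sum = 0 := fun h => by
    rw [Multiset.card_eq_zero.1 h, Multiset.sum_zero]
  rw [sum_cycleType] at hsum hzero
  rw [Nat.even_iff, cycleTypeHalfSum]
  omega

theorem exists_even_involution_conj_eq_inv (hα : Fintype.card α = 10 ∨ Fintype.card α = 14)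
    (g : Perm α) : ∃ s : Perm α, s ^ 2 = 1 ∧ s * g * s⁻¹ = g⁻¹ ∧ sign s = 1 := by
  obtain ⟨s, hs, hsign⟩ := isReversibleWithSign_cycleTypeHalfSum g
  by_cases heven : Even g.cycleTypeHalfSum
  · exact ⟨s, hs.sq_eq_one, hs.conj_eq_inv, by rw [hsign, heven.neg_one_pow]⟩
  have hodd : (-1 : ℤˣ) ^ g.cycleTypeHalfSum = -1 :=
    (Nat.not_even_iff_odd.1 heven).neg_one_pow
  by_cases hflex : (∃ k ∈ g.cycleType, Even k) ∨ ¬ g.cycleType.Nodup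
  · obtain ⟨t, ht, htsign⟩ : IsReversibleWithSign g (-(-1) ^ g.cycleTypeHalfSum) := by
      obtain ⟨k, hk, hk_even⟩ | hg := hflex
      · exact isReversibleWithSign_neg_of_even_mem_cycleType hk hk_even
      · exact isReversibleWithSign_neg_of_not_nodup hg
    exact ⟨t, ht.sq_eq_one, ht.conj_eq_inv, by rw [htsign, hodd, neg_neg]⟩
  push Not at hflex
  obtain ⟨a, ha, b, hb, hab⟩ : ∃ a ∈ g.supportᶜ, ∃ b ∈ g.supportᶜ, a ≠ b := by
    refine one_lt_card.1 (not_le.1 fun hfix => heven ?_)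
    exact even_cycleTypeHalfSum hα (fun k hk => Nat.not_even_iff_odd.1 (hflex.1 k hk))
      hflex.2 hfix
  simp only [mem_compl, mem_support, not_not] at ha hb
  obtain ⟨hs₂, hconj⟩ := hs.mul_swap ha hb
  exact ⟨s * swap a b, hs₂, hconj,
    by rw [map_mul, hsign, hodd, sign_swap hab, neg_mul_neg, one_mul]⟩

theorem two_mem_cycleType_of_sq_eq_one {g : Perm α} (hg : g ^ 2 = 1) (hg₁ : g ≠ 1) :
    2 ∈ g.cycleType := by
  rw [cycleType_of_pow_prime_eq_one hg]
  exact Multiset.mem_replicate.2 ⟨by simpa [cycleType_eq_zero] using hg₁, rfl⟩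

theorem swap_mul_swap_of_disjoint {x y a b : α} (hxy : x ≠ y) (hab : a ≠ b)
    (hd : (swap x y).Disjoint (swap a b)) :
    (swap x y * swap a b) ^ 2 = 1 ∧ sign (swap x y * swap a b) = 1 ∧ swap x y * swap a b ≠ 1 := by
  refine ⟨by rw [hd.commute.mul_pow, sq, sq, swap_mul_self, swap_mul_self, one_mul],
    by rw [map_mul, sign_swap hxy, sign_swap hab, neg_mul_neg, one_mul], fun h => hab ?_⟩
  have hb : swap x y b = b := (hd b).resolve_right (by simpa using hab)
  simpa [hb] using (congrArg (· a) h).symm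

theorem exists_commute_swap_mul_swap {g : Perm α} {x y a b : α} (hxy : x ≠ y) (hab : a ≠ b)
    (hxyg : Commute (swap x y) g) (ha : g a = a) (hb : g b = b) (hxya : swap x y a = a)
    (hxyb : swap x y b = b) :
    ∃ s : Perm α, s ^ 2 = 1 ∧ sign s = 1 ∧ Commute s g ∧ s ≠ 1 ∧ s ≠ g := by
  obtain ⟨hs, hsign, hs₁⟩ :=
    swap_mul_swap_of_disjoint hxy hab (swap_disjoint_of_apply_eq hxya hxyb).symm
  refine ⟨_, hs, hsign, hxyg.mul_left (swap_disjoint_of_apply_eq ha hb).commute, hs₁,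
    fun h => hab ?_⟩
  simpa [hxyb, ha] using (congrArg (· a) h).symm

theorem exists_commute_swap_mul_swap_of_five_le_card_support {g : Perm α} (hg : g ^ 2 = 1)
    (hsupp : 5 ≤ #g.support) :
    ∃ s : Perm α, s ^ 2 = 1 ∧ sign s = 1 ∧ Commute s g ∧ s ≠ 1 ∧ s ≠ g := by
  have hg₁ : g ≠ 1 := by rintro rfl; simp at hsupp
  obtain ⟨c, h, rfl, hch, -, hc⟩ := mem_cycleType_iff.1 (two_mem_cycleType_of_sq_eq_one hg hg₁)
  obtain ⟨x, y, hxy, rfl⟩ := card_support_eq_two.1 hc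
  rw [hch.support_mul, card_union_of_disjoint (disjoint_iff_disjoint_support.1 hch),
    card_support_swap hxy] at hsupp
  have hh : h ^ 2 = 1 := by
    rwa [hch.commute.mul_pow, sq (swap x y), swap_mul_self, one_mul] at hg
  have hh₁ : h ≠ 1 := by rintro rfl; simp at hsupp
  obtain ⟨d, h', rfl, hdh', -, hd⟩ := mem_cycleType_iff.1 (two_mem_cycleType_of_sq_eq_one hh hh₁)
  obtain ⟨a, b, hab, rfl⟩ := card_support_eq_two.1 hd
  have hxyab : (swap x y).Disjoint (swap a b) :=
    hch.mono le_rfl (hdh'.support_mul ▸ subset_union_left)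
  have hxyh' : (swap x y).Disjoint h' := hch.mono le_rfl (hdh'.support_mul ▸ subset_union_right)
  obtain ⟨hs, hsign, hs₁⟩ := swap_mul_swap_of_disjoint hxy hab hxyab
  rw [← mul_assoc]
  refine ⟨_, hs, hsign, (Commute.refl _).mul_right (hxyh'.mul_left hdh').commute, hs₁, ?_⟩
  intro heq
  rw [left_eq_mul] at heq
  subst heq
  simp [card_support_swap hab] at hsupp

theorem exists_commute_even_involution {g : Perm α} (hg : g ^ 2 = 1)
    (hα : 6 ≤ Fintype.card α) :
    ∃ s : Perm α, s ^ 2 = 1 ∧ sign s = 1 ∧ Commute s g ∧ s ≠ 1 ∧ s ≠ g := by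
  rcases eq_or_ne g 1 with rfl | hg₁
  · obtain ⟨x, -, y, -, hxy⟩ := one_lt_card.1 (by rw [card_univ]; omega : 1 < #(univ : Finset α))
    obtain ⟨a, ha, b, hb, hab⟩ := one_lt_card.1
      (by rw [card_compl, card_pair hxy]; omega : 1 < #({x, y}ᶜ : Finset α))
    simp only [mem_compl, mem_insert, mem_singleton, not_or] at ha hb
    exact exists_commute_swap_mul_swap hxy hab (Commute.one_right _) rfl rfl
      (swap_apply_of_ne_of_ne ha.1 ha.2) (swap_apply_of_ne_of_ne hb.1 hb.2)
  by_cases hfix : 2 ≤ #g.supportᶜ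
  · obtain ⟨c, h, rfl, hch, -, hc⟩ :=
      mem_cycleType_iff.1 (two_mem_cycleType_of_sq_eq_one hg hg₁)
    obtain ⟨x, y, hxy, rfl⟩ := card_support_eq_two.1 hc
    obtain ⟨a, ha, b, hb, hab⟩ := one_lt_card.1 hfix
    simp only [mem_compl, mem_support, not_not] at ha hb
    have hxy_fix {z : α} (hz : (swap x y * h) z = z) : swap x y z = z := by
      by_contra hne
      exact (mem_support.1 (hch.support_mul ▸ mem_union_left _ (mem_support.2 hne))) hz
    exact exists_commute_swap_mul_swap hxy hab ((Commute.refl _).mul_right hch.commute) ha hb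
      (hxy_fix ha) (hxy_fix hb)
  rw [not_le, card_compl] at hfix
  exact exists_commute_swap_mul_swap_of_five_le_card_support hg (by omega)

end Equiv.Perm

open Equiv.Perm in
theorem isProductOfTwoInvolutions_of_mem_alternatingGroup {α : Type*} [Fintype α]
    [DecidableEq α] (hα : Fintype.card α = 10 ∨ Fintype.card α = 14) (g : alternatingGroup α) :
    IsProductOfTwoInvolutions g := by
  by_cases hg : g ^ 2 = 1
  · obtain ⟨s, hs, hsign, hsg, hs₁, hsg₁⟩ :=
      exists_commute_even_involution (congrArg Subtype.val hg) (by omega)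
    exact isProductOfTwoInvolutions_of_commute (s := ⟨s, mem_alternatingGroup.2 hsign⟩)
      (Subtype.ext hs) hg (Subtype.ext hsg.eq) (fun h => hs₁ (congrArg Subtype.val h))
      (fun h => hsg₁ (congrArg Subtype.val h))
  · obtain ⟨s, hs, hsg, hsign⟩ := exists_even_involution_conj_eq_inv hα g
    exact isProductOfTwoInvolutions_of_conj_eq_inv (s := ⟨s, mem_alternatingGroup.2 hsign⟩)
      (Subtype.ext hs) (Subtype.ext hsg) hg

/-- Every element of `A₁₀` is a product of two involutions of `A₁₀`, and every
element of `A₁₄` is a product of two involutions of `A₁₄`. -/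
theorem a10_a14_product_of_two_involutions :
    (∀ g : alternatingGroup (Fin 10), ∃ s t : alternatingGroup (Fin 10),
        s ^ 2 = 1 ∧ s ≠ 1 ∧ t ^ 2 = 1 ∧ t ≠ 1 ∧ g = s * t) ∧
    (∀ g : alternatingGroup (Fin 14), ∃ s t : alternatingGroup (Fin 14),
        s ^ 2 = 1 ∧ s ≠ 1 ∧ t ^ 2 = 1 ∧ t ≠ 1 ∧ g = s * t) :=
  ⟨isProductOfTwoInvolutions_of_mem_alternatingGroup (Or.inl (Fintype.card_fin 10)),
    isProductOfTwoInvolutions_of_mem_alternatingGroup (Or.inr (Fintype.card_fin 14))⟩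
end

section
/- Let q be a prime power with q ≡ 3 (mod 4) and let F be a finite field with q elements. Then there exists an element of PSL₂(F) = SL₂(F)/Z(SL₂(F)) that is not conjugate to its inverse by any involution of PSL₂(F); in particular PSL₂(F) is not strongly real. -/
open Matrix
open scoped MatrixGroups

/-! Let `u = !![1, 1; 0, 1]`. If `u` were conjugate to `u⁻¹` in `PSL₂(F)`, some
`T ∈ SL₂(F)` would satisfy `u T u = r T` for a scalar `r`. Comparing entries, `r ≠ 1` forces
`T` to have a zero first column, while `r = 1` forces `T = !![a, b; 0, -a]`, so that
`det T = 1` reads `-a² = 1`. Hence `u` is not even real in `PSL₂(F)` as soon as `-1` is not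
a square in `F`, i.e. when `#F ≡ 3 (mod 4)`. -/

section

variable {R : Type*} [CommRing R]

theorem Matrix.isSquare_neg_one_of_unipotent_conj_eq_smul [NoZeroDivisors R] {b : R} (hb : b ≠ 0)
    {T : Matrix (Fin 2) (Fin 2) R} (hT : T.det = 1) {r : R}
    (h : !![1, b; 0, 1] * T * !![1, b; 0, 1] = r • T) : IsSquare (-1 : R) := by
  have h00 := congr_fun₂ h 0 0
  have h01 := congr_fun₂ h 0 1
  have h10 := congr_fun₂ h 1 0
  simp only [mul_apply, Fin.sum_univ_two, of_apply, cons_val', cons_val_zero, cons_val_one,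
    empty_val', cons_val_fin_one, smul_apply, smul_eq_mul] at h00 h01 h10
  rw [det_fin_two] at hT
  by_cases hr : r = 1
  · subst hr
    have hc : T 1 0 = 0 := (mul_eq_zero_iff_left hb).mp (by linear_combination h00)
    have htr : T 0 0 + T 1 1 = 0 :=
      (mul_eq_zero_iff_left hb).mp (by linear_combination h01 - b * h00)
    exact ⟨T 0 0, by linear_combination hT - T 0 0 * htr + T 0 1 * hc⟩
  · have h1r : 1 - r ≠ 0 := sub_ne_zero.mpr (Ne.symm hr)
    have hc : T 1 0 = 0 := (mul_eq_zero_iff_left h1r).mp (by linear_combination h10)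
    have ha : T 0 0 = 0 := (mul_eq_zero_iff_left h1r).mp (by linear_combination h00 - b * hc)
    exact ⟨0, by linear_combination hT - T 1 1 * ha + T 0 1 * hc⟩

theorem Matrix.SpecialLinearGroup.coe_transvection_zero_one (b : R) :
    (transvection (zero_ne_one : (0 : Fin 2) ≠ 1) b : Matrix (Fin 2) (Fin 2) R) =
      !![1, b; 0, 1] := by
  ext i j
  fin_cases i <;> fin_cases j <;> simp [transvection_coe]

theorem Matrix.ProjectiveSpecialLinearGroup.not_isConj_transvection_inv [NoZeroDivisors R]
    (hR : ¬IsSquare (-1 : R)) {b : R} (hb : b ≠ 0) :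
    ¬IsConj (SpecialLinearGroup.transvection (zero_ne_one : (0 : Fin 2) ≠ 1) b : PSL(2, R))
      (SpecialLinearGroup.transvection (zero_ne_one : (0 : Fin 2) ≠ 1) b)⁻¹ := by
  set u := SpecialLinearGroup.transvection (zero_ne_one : (0 : Fin 2) ≠ 1) b
  intro hconj
  obtain ⟨c, hc⟩ := isConj_iff.mp hconj
  obtain ⟨T, rfl⟩ := QuotientGroup.mk_surjective c
  have hcenter : u * (T * u * T⁻¹) ∈ Subgroup.center SL(2, R) := by
    rw [← QuotientGroup.mk_inv, ← QuotientGroup.mk_mul, ← QuotientGroup.mk_inv,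
      ← QuotientGroup.mk_mul, QuotientGroup.eq] at hc
    simpa [mul_assoc] using inv_mem hc
  obtain ⟨r, -, hr⟩ := SpecialLinearGroup.mem_center_iff.mp hcenter
  have huTu : u * T * u = u * (T * u * T⁻¹) * T := by group
  have hmat := congr(Subtype.val $huTu)
  simp only [SpecialLinearGroup.coe_mul, ← hr, u, SpecialLinearGroup.coe_transvection_zero_one,
    scalar_apply, ← smul_eq_diagonal_mul] at hmat
  exact hR (isSquare_neg_one_of_unipotent_conj_eq_smul hb T.2 hmat)

end

theorem psl2_not_strongly_real_of_three_mod_four_general {q : ℕ}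
    (hq3 : q % 4 = 3)
    (F : Type*) [Field F] [Fintype F] (hF : Fintype.card F = q) :
    ∃ g : ProjectiveSpecialLinearGroup (Fin 2) F,
      ∀ t : ProjectiveSpecialLinearGroup (Fin 2) F,
        t ^ 2 = 1 → t ≠ 1 → t⁻¹ * g * t ≠ g⁻¹ := by
  have hF' : ¬IsSquare (-1 : F) := by
    rw [FiniteField.isSquare_neg_one_iff, hF, hq3, not_not]
  refine ⟨(SpecialLinearGroup.transvection (zero_ne_one : (0 : Fin 2) ≠ 1) (1 : F) : PSL(2, F)),
    fun t _ _ h => ?_⟩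
  exact ProjectiveSpecialLinearGroup.not_isConj_transvection_inv hF' one_ne_zero
    (isConj_iff.mpr ⟨t⁻¹, by simpa using h⟩)

/-- If `q ≡ 3 (mod 4)` then some element of `PSL₂(F_q)` is not inverted by any
involution; in particular `PSL₂(F_q)` is not strongly real. -/
theorem psl2_not_strongly_real_of_three_mod_four {q : ℕ} (hq : IsPrimePow q)
    (hq3 : q % 4 = 3)
    (F : Type*) [Field F] [Fintype F] [DecidableEq F] (hF : Fintype.card F = q) :
    ∃ g : ProjectiveSpecialLinearGroup (Fin 2) F,
      ∀ t : ProjectiveSpecialLinearGroup (Fin 2) F,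
        t ^ 2 = 1 → t ≠ 1 → t⁻¹ * g * t ≠ g⁻¹ :=
  psl2_not_strongly_real_of_three_mod_four_general hq3 F hF
end

section
/- Let q be a prime power with q ≡ 1 (mod 4) and let F be a finite field with q elements. Then PSL₂(F) = SL₂(F)/Z(SL₂(F)) is strongly real: every element of PSL₂(F) is conjugate to its inverse by an involution of PSL₂(F). -/
/-!
If `i² = -1` in `F`, every `A ∈ SL₂(F)` is inverted by conjugation with some `t ∈ SL₂(F)`
with `t² = -1`. Indeed, a traceless `2 × 2` matrix `T` satisfies
`T A + A T = tr(A) T + tr(T A)` and `T² = -det T`; since `adj A = tr(A) - A`, any traceless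
`T` of determinant one with `tr(T A) = 0` conjugates `A` to `adj A = A⁻¹`, and such a `T`
is found among `[[i, y], [0, -i]]`, `[[i, 0], [z, -i]]` and `[[0, 1], [-1, 0]]`.
In characteristic `≠ 2` the image of `t` in `PSL₂(F)` is an involution: `t² = -1` is central,
whereas `t` is not, since central elements of `SL₂` square to `1`.
For `F = 𝔽_q` with `q ≡ 1 (mod 4)`, `q` is odd and `-1` is a square.
-/

open Matrix

open scoped MatrixGroups

namespace Matrix

variable {R : Type*} [CommRing R]

theorem mul_add_mul_of_trace_eq_zero {T : Matrix (Fin 2) (Fin 2) R} (hT : T.trace = 0)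
    (A : Matrix (Fin 2) (Fin 2) R) :
    T * A + A * T = A.trace • T + (T * A).trace • (1 : Matrix (Fin 2) (Fin 2) R) := by
  have hT' : T 1 1 = -T 0 0 := by rw [trace_fin_two] at hT; linear_combination hT
  ext i j
  fin_cases i <;> fin_cases j <;>
    simp only [Matrix.add_apply, Matrix.smul_apply, smul_eq_mul, mul_apply, Fin.sum_univ_two,
      trace_fin_two, hT', one_apply, Fin.isValue, Fin.zero_eta, Fin.mk_one, Fin.reduceEq,
      ↓reduceIte] <;>
    ring

theorem mul_self_of_trace_eq_zero {T : Matrix (Fin 2) (Fin 2) R} (hT : T.trace = 0) :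
    T * T = -T.det • (1 : Matrix (Fin 2) (Fin 2) R) := by
  have hT' : T 1 1 = -T 0 0 := by rw [trace_fin_two] at hT; linear_combination hT
  ext i j
  fin_cases i <;> fin_cases j <;>
    simp only [Matrix.smul_apply, smul_eq_mul, mul_apply, Fin.sum_univ_two, det_fin_two, hT',
      one_apply, Fin.isValue, Fin.zero_eta, Fin.mk_one, Fin.reduceEq, ↓reduceIte] <;>
    ring

theorem mul_eq_mul_adjugate_of_trace_eq_zero {T A : Matrix (Fin 2) (Fin 2) R}
    (hT : T.trace = 0) (hTA : (T * A).trace = 0) : A * T = T * adjugate A := by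
  have hadj : adjugate A = A.trace • (1 : Matrix (Fin 2) (Fin 2) R) - A := by
    rw [adjugate_fin_two, trace_fin_two]
    ext i j
    fin_cases i <;> fin_cases j <;> simp
  have hanti := mul_add_mul_of_trace_eq_zero hT A
  rw [hTA, zero_smul, add_zero] at hanti
  rw [hadj, mul_sub, mul_smul_comm, mul_one, ← hanti]
  abel

theorem exists_trace_eq_zero_det_eq_one_trace_mul_eq_zero {F : Type*} [Field F]
    (hi : IsSquare (-1 : F)) (A : Matrix (Fin 2) (Fin 2) F) :
    ∃ T : Matrix (Fin 2) (Fin 2) F, T.trace = 0 ∧ T.det = 1 ∧ (T * A).trace = 0 := by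
  obtain ⟨i, hi⟩ := hi
  simp only [trace_fin_two, det_fin_two, mul_apply, Fin.sum_univ_two]
  by_cases hc : A 1 0 = 0
  · by_cases hb : A 0 1 = 0
    · refine ⟨!![0, 1; -1, 0], ?_, ?_, ?_⟩ <;> simp [hb, hc]
    · refine ⟨!![i, 0; i * (A 1 1 - A 0 0) / A 0 1, -i], ?_, ?_, ?_⟩ <;>
        simp only [of_apply, cons_val', cons_val_zero, cons_val_one, cons_val_fin_one]
      · ring
      · linear_combination hi
      · field_simp
        ring
  · refine ⟨!![i, i * (A 1 1 - A 0 0) / A 1 0; 0, -i], ?_, ?_, ?_⟩ <;>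
      simp only [of_apply, cons_val', cons_val_zero, cons_val_one, cons_val_fin_one]
    · ring
    · linear_combination hi
    · field_simp
      ring

namespace SpecialLinearGroup

theorem pow_card_eq_one_of_mem_center {n : Type*} [Fintype n] [DecidableEq n]
    {g : Matrix.SpecialLinearGroup n R}
    (hg : g ∈ Subgroup.center (Matrix.SpecialLinearGroup n R)) : g ^ Fintype.card n = 1 := by
  obtain ⟨r, hr, hrg⟩ := mem_center_iff.mp hg
  ext : 2
  rw [coe_pow, ← hrg, ← map_pow, hr, map_one, coe_one]

theorem exists_sq_eq_neg_one_inv_mul_mul_eq_inv {F : Type*} [Field F]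
    (hi : IsSquare (-1 : F)) (A : SL(2, F)) :
    ∃ t : SL(2, F), t ^ 2 = -1 ∧ t⁻¹ * A * t = A⁻¹ := by
  obtain ⟨T, hT, hdet, hTA⟩ := exists_trace_eq_zero_det_eq_one_trace_mul_eq_zero hi A
  let t : SL(2, F) := ⟨T, hdet⟩
  have ht : (t : Matrix (Fin 2) (Fin 2) F) ^ 2 = -1 := by
    rw [sq, mul_self_of_trace_eq_zero hT, hdet, neg_one_smul]
  have hAt : A.1 * T = T * adjugate A.1 :=
    mul_eq_mul_adjugate_of_trace_eq_zero hT hTA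
  refine ⟨t, ?_, ?_⟩
  · ext : 2
    simp [coe_pow, ht]
  · rw [mul_assoc, inv_mul_eq_iff_eq_mul]
    ext : 2
    simpa [coe_inv] using congrFun₂ hAt _ _

end SpecialLinearGroup

namespace ProjectiveSpecialLinearGroup

theorem exists_sq_eq_one_ne_one_inv_mul_mul_eq_inv {F : Type*} [Field F]
    (hF : ringChar F ≠ 2) (hi : IsSquare (-1 : F)) (g : ProjectiveSpecialLinearGroup (Fin 2) F) :
    ∃ t : ProjectiveSpecialLinearGroup (Fin 2) F,
      t ^ 2 = 1 ∧ t ≠ 1 ∧ t⁻¹ * g * t = g⁻¹ := by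
  obtain ⟨A, rfl⟩ := QuotientGroup.mk_surjective g
  obtain ⟨t, ht, htA⟩ := SpecialLinearGroup.exists_sq_eq_neg_one_inv_mul_mul_eq_inv hi A
  have hneg : (-1 : SL(2, F)) ≠ 1 := fun h ↦ Ring.neg_one_ne_one_of_char_ne_two hF <| by
    simpa using (SpecialLinearGroup.ext_iff _ _).mp h 0 0
  refine ⟨t, ?_, ?_, congrArg QuotientGroup.mk htA⟩
  · rw [← QuotientGroup.mk_pow, QuotientGroup.eq_one_iff, ht]
    exact Subgroup.mem_center_iff.mpr fun g ↦ by simp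
  · rw [Ne, QuotientGroup.eq_one_iff]
    exact fun hc ↦ hneg (ht ▸ SpecialLinearGroup.pow_card_eq_one_of_mem_center hc)

end ProjectiveSpecialLinearGroup

end Matrix

theorem psl2_strongly_real_of_one_mod_four_general {q : ℕ}
    (hq1 : q % 4 = 1)
    (F : Type*) [Field F] [Fintype F] (hF : Fintype.card F = q) :
    ∀ g : ProjectiveSpecialLinearGroup (Fin 2) F,
      ∃ t : ProjectiveSpecialLinearGroup (Fin 2) F,
        t ^ 2 = 1 ∧ t ≠ 1 ∧ t⁻¹ * g * t = g⁻¹ := by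
  have hchar : ringChar F ≠ 2 := fun h ↦ by
    have := FiniteField.even_card_iff_char_two.mp h
    omega
  exact ProjectiveSpecialLinearGroup.exists_sq_eq_one_ne_one_inv_mul_mul_eq_inv hchar
    (FiniteField.isSquare_neg_one_iff.mpr (by omega))

/-- If `q ≡ 1 (mod 4)` then `PSL₂(F_q)` is strongly real: every element is
conjugate to its inverse by an involution. -/
theorem psl2_strongly_real_of_one_mod_four {q : ℕ} (hq : IsPrimePow q)
    (hq1 : q % 4 = 1)
    (F : Type*) [Field F] [Fintype F] [DecidableEq F] (hF : Fintype.card F = q) :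
    ∀ g : ProjectiveSpecialLinearGroup (Fin 2) F,
      ∃ t : ProjectiveSpecialLinearGroup (Fin 2) F,
        t ^ 2 = 1 ∧ t ≠ 1 ∧ t⁻¹ * g * t = g⁻¹ :=
  psl2_strongly_real_of_one_mod_four_general hq1 F hF
end
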